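/- Let d ≥ 1, let 0 ≤ δ < p − 1 and p > d/2, and set μ := (p − 1 − δ)/2. Define W_p : ℝ^d → ℝ by W_p(x) = p μ / (μ² + |x|²). Then ∫_{ℝ^d} W_p(x)^p dx = p^p π^{d/2} (2/(p − 1 − δ))^{p − d} Γ(p − d/2)/Γ(p). In particular, with δ such that δ = d − 1, one has lim_{p → d⁺} (∫_{ℝ^d} W_p^p dx)^{1/p} = d √π (Γ(d/2)/Γ(d))^{1/d}. -/

import Mathlib

open MeasureTheory Filter

/-- `∫_{ℝ^d} W_p^p` where `W_p(x) = pμ/(μ² + |x|²)` and `μ = (p − 1 − δ)/2`. -/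
noncomputable def WpIntegral (d : ℕ) (δ p : ℝ) : ℝ :=
  ∫ x : EuclideanSpace ℝ (Fin d),
    (p * ((p - 1 - δ) / 2) / (((p - 1 - δ) / 2) ^ 2 + ‖x‖ ^ 2)) ^ p

/-!
In polar coordinates `∫_E (c² + ‖x‖²)^{-p}` becomes `n |B₁| ∫_0^∞ r^{n-1} (c² + r²)^{-p} dr`, and the
substitutions `r = c √t` and `t = x / (1 - x)` turn the radial integral into the Beta integral
`B(n/2, p - n/2)`, which the Euler identity `B(a, b) = Γ(a) Γ(b) / Γ(a + b)` evaluates. For the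
limit, `(2/(p - d))^{p - d} → 1` as `p → d⁺` since `t log t → 0`, and every other factor of the
closed form is continuous at `p = d`.
-/

open Set Real Topology Module

theorem integral_rpow_mul_one_sub_rpow {a b : ℝ} (ha : 0 < a) (hb : 0 < b) :
    ∫ x in (0 : ℝ)..1, x ^ (a - 1) * (1 - x) ^ (b - 1) = Gamma a * Gamma b / Gamma (a + b) := by
  apply Complex.ofReal_injective
  have hbeta := Complex.betaIntegral_eq_Gamma_mul_div a b (by simpa using ha) (by simpa using hb)
  rw [← Complex.ofReal_add, Complex.Gamma_ofReal, Complex.Gamma_ofReal, Complex.Gamma_ofReal]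
    at hbeta
  push_cast
  rw [← hbeta, Complex.betaIntegral, ← intervalIntegral.integral_ofReal]
  refine intervalIntegral.integral_congr fun x hx => ?_
  rw [uIcc_of_le zero_le_one] at hx
  push_cast
  rw [Complex.ofReal_cpow hx.1, Complex.ofReal_cpow (sub_nonneg.2 hx.2)]
  push_cast
  rfl

theorem integral_Ioi_eq_integral_Ioo_div_one_sub (g : ℝ → ℝ) :
    ∫ t in Ioi 0, g t = ∫ x in Ioo 0 1, ((1 - x) ^ 2)⁻¹ * g (x / (1 - x)) := by
  have himage : (fun x : ℝ => x / (1 - x)) '' Ioo 0 1 = Ioi 0 := by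
    ext y
    refine ⟨fun ⟨x, ⟨hx0, hx1⟩, hxy⟩ => hxy ▸ div_pos hx0 (sub_pos.2 hx1), fun hy => ?_⟩
    have hy1 : 0 < 1 + y := by linarith [mem_Ioi.1 hy]
    refine ⟨y / (1 + y), ⟨div_pos hy hy1, (div_lt_one hy1).2 (by linarith)⟩, ?_⟩
    field_simp
    ring
  have hderiv : ∀ x ∈ Ioo (0 : ℝ) 1,
      HasDerivWithinAt (fun x => x / (1 - x)) ((1 - x) ^ 2)⁻¹ (Ioo 0 1) x := by
    intro x hx
    have h := (hasDerivAt_id' x).div ((hasDerivAt_id' x).const_sub 1) (sub_pos.2 hx.2).ne'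
    rw [show ((1 - x) ^ 2)⁻¹ = (1 * (1 - x) - x * -1) / (1 - x) ^ 2 by ring]
    exact h.hasDerivWithinAt
  have hinj : InjOn (fun x : ℝ => x / (1 - x)) (Ioo 0 1) := by
    intro x hx y hy hxy
    simp only [div_eq_div_iff (sub_pos.2 hx.2).ne' (sub_pos.2 hy.2).ne'] at hxy
    linarith
  rw [← himage, integral_image_eq_integral_abs_deriv_smul measurableSet_Ioo hderiv hinj]
  refine setIntegral_congr_fun measurableSet_Ioo fun x _ => ?_
  rw [smul_eq_mul, abs_of_nonneg (by positivity)]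

theorem integral_Ioi_rpow_mul_one_add_rpow {a b : ℝ} (ha : 0 < a) (hb : 0 < b) :
    ∫ t in Ioi 0, t ^ (a - 1) * (1 + t) ^ (-(a + b)) = Gamma a * Gamma b / Gamma (a + b) := by
  rw [integral_Ioi_eq_integral_Ioo_div_one_sub, ← integral_rpow_mul_one_sub_rpow ha hb,
    intervalIntegral.integral_of_le zero_le_one, integral_Ioc_eq_integral_Ioo]
  refine setIntegral_congr_fun measurableSet_Ioo fun x ⟨hx0, hx1⟩ => ?_
  have h1x : 0 < 1 - x := sub_pos.2 hx1
  have hadd : 1 + x / (1 - x) = (1 - x)⁻¹ := by field_simp; ring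
  have hsplit : (1 - x) ^ (a + b) = (1 - x) ^ (a - 1) * (1 - x) ^ (b - 1) * (1 - x) ^ 2 := by
    rw [← rpow_add h1x, ← rpow_natCast, ← rpow_add h1x]
    ring_nf
  rw [hadd, div_rpow hx0.le h1x.le, inv_rpow h1x.le, rpow_neg h1x.le, inv_inv, hsplit]
  have := (rpow_pos_of_pos h1x (a - 1)).ne'
  field_simp

theorem integral_Ioi_rpow_mul_sq_add_sq_rpow_neg {s p c : ℝ} (hs : 0 < s) (hsp : s / 2 < p)
    (hc : 0 < c) :
    ∫ r in Ioi 0, r ^ (s - 1) * (c ^ 2 + r ^ 2) ^ (-p)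
      = c ^ (s - 2 * p) * (Gamma (s / 2) * Gamma (p - s / 2) / (2 * Gamma p)) := by
  have hscale : ∫ r in Ioi 0, r ^ (s - 1) * (c ^ 2 + r ^ 2) ^ (-p)
      = c ^ (s - 2 * p) * ∫ x in Ioi 0, x ^ (s - 1) * (1 + x ^ 2) ^ (-p) := by
    have h := integral_comp_mul_left_Ioi (fun r => r ^ (s - 1) * (c ^ 2 + r ^ 2) ^ (-p)) 0 hc
    rw [mul_zero, smul_eq_mul, eq_inv_mul_iff_mul_eq₀ hc.ne'] at h
    have hcpow : c * c ^ (s - 1) * (c ^ 2) ^ (-p) = c ^ (s - 2 * p) := by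
      rw [← rpow_natCast, ← rpow_mul hc.le, mul_comm c, ← rpow_add_one hc.ne', ← rpow_add hc]
      ring_nf
    rw [← h, ← integral_const_mul, ← integral_const_mul]
    refine setIntegral_congr_fun measurableSet_Ioi fun x hx => ?_
    have hx : 0 < x := hx
    rw [mul_rpow hc.le hx.le, show c ^ 2 + (c * x) ^ 2 = c ^ 2 * (1 + x ^ 2) by ring,
      mul_rpow (by positivity) (by positivity), ← hcpow]
    ring
  have hsquare : 2⁻¹ * ∫ t in Ioi (0 : ℝ), t ^ (s / 2 - 1) * (1 + t) ^ (-p)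
      = ∫ x in Ioi (0 : ℝ), x ^ (s - 1) * (1 + x ^ 2) ^ (-p) := by
    rw [← integral_comp_rpow_Ioi_of_pos two_pos, ← integral_const_mul]
    refine setIntegral_congr_fun measurableSet_Ioi fun x hx => ?_
    have hx : 0 < x := hx
    rw [smul_eq_mul, ← rpow_mul hx.le, rpow_two, show (2 : ℝ) - 1 = 1 by norm_num, rpow_one,
      show (2 : ℝ) * (s / 2 - 1) = (s - 1) + (-1 : ℝ) by ring, rpow_add hx, rpow_neg_one]
    field_simp
  have hbeta := integral_Ioi_rpow_mul_one_add_rpow (half_pos hs) (sub_pos.2 hsp)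
  rw [add_sub_cancel] at hbeta
  rw [hscale, ← hsquare, hbeta]
  ring

theorem integral_sq_add_norm_sq_rpow_neg {E : Type*} [NormedAddCommGroup E]
    [InnerProductSpace ℝ E] [FiniteDimensional ℝ E] [MeasurableSpace E] [BorelSpace E]
    [Nontrivial E] {p c : ℝ} (hp : (finrank ℝ E : ℝ) / 2 < p) (hc : 0 < c) :
    ∫ x : E, (c ^ 2 + ‖x‖ ^ 2) ^ (-p)
      = π ^ ((finrank ℝ E : ℝ) / 2) * c ^ ((finrank ℝ E : ℝ) - 2 * p)
        * (Gamma (p - finrank ℝ E / 2) / Gamma p) := by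
  set n : ℕ := finrank ℝ E with hn
  have hn0 : (0 : ℝ) < n := Nat.cast_pos.2 finrank_pos
  have hball : volume.real (Metric.ball (0 : E) 1) = √π ^ n / Gamma (n / 2 + 1) := by
    rw [measureReal_def, InnerProductSpace.volume_ball, ENNReal.ofReal_one, one_pow, one_mul,
      ENNReal.toReal_ofReal (by positivity)]
  have hradial : ∫ r in Ioi (0 : ℝ), r ^ (n - 1) • (c ^ 2 + r ^ 2) ^ (-p)
      = ∫ r in Ioi (0 : ℝ), r ^ ((n : ℝ) - 1) * (c ^ 2 + r ^ 2) ^ (-p) := by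
    refine setIntegral_congr_fun measurableSet_Ioi fun r _ => ?_
    rw [smul_eq_mul, ← rpow_natCast, Nat.cast_sub finrank_pos, Nat.cast_one]
  rw [integral_fun_norm_addHaar volume (fun r => (c ^ 2 + r ^ 2) ^ (-p)), hball, hradial,
    integral_Ioi_rpow_mul_sq_add_sq_rpow_neg hn0 hp hc, nsmul_eq_mul, smul_eq_mul,
    Gamma_add_one (by positivity), sqrt_eq_rpow, ← rpow_natCast, ← rpow_mul pi_pos.le]
  have := (Gamma_pos_of_pos (half_pos hn0)).ne'
  have := (Gamma_pos_of_pos ((half_pos hn0).trans hp)).ne'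
  rw [← hn]
  field_simp

theorem WpIntegral_eq {d : ℕ} (hd : 1 ≤ d) {δ p : ℝ} (hδp : δ < p - 1) (hdp : (d : ℝ) / 2 < p) :
    WpIntegral d δ p
      = p ^ p * π ^ ((d : ℝ) / 2) * (2 / (p - 1 - δ)) ^ (p - d)
        * (Gamma (p - d / 2) / Gamma p) := by
  have : Nonempty (Fin d) := ⟨⟨0, hd⟩⟩
  have hp : 0 < p := by linarith [show (0 : ℝ) ≤ d / 2 by positivity]
  set μ := (p - 1 - δ) / 2 with hμ
  have hμ0 : 0 < μ := by linarith
  have hWp : ∀ x : EuclideanSpace ℝ (Fin d),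
      (p * μ / (μ ^ 2 + ‖x‖ ^ 2)) ^ p = (p * μ) ^ p * (μ ^ 2 + ‖x‖ ^ 2) ^ (-p) := fun x => by
    rw [div_rpow (by positivity) (by positivity), rpow_neg (by positivity), div_eq_mul_inv]
  have hinv : 2 / (p - 1 - δ) = μ⁻¹ := by rw [hμ, inv_div]
  rw [WpIntegral, integral_congr_ae (Eventually.of_forall hWp), integral_const_mul,
    integral_sq_add_norm_sq_rpow_neg (by simpa using hdp) hμ0, finrank_euclideanSpace_fin,
    hinv, mul_rpow hp.le hμ0.le, inv_rpow hμ0.le, ← rpow_neg hμ0.le]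
  have hμpow : μ ^ p * μ ^ ((d : ℝ) - 2 * p) = μ ^ (-(p - d)) := by
    rw [← rpow_add hμ0]; ring_nf
  rw [← hμpow]
  ring

theorem tendsto_div_rpow_self_nhdsGT_zero {a : ℝ} (ha : 0 < a) :
    Tendsto (fun t => (a / t) ^ t) (𝓝[>] 0) (𝓝 1) := by
  have hexp : Tendsto (fun t => exp (t * log a - log t * t)) (𝓝[>] 0) (𝓝 1) := by
    have h := ((tendsto_id.mul_const (log a)).mono_left nhdsWithin_le_nhds).sub
      (by simpa using tendsto_log_mul_rpow_nhdsGT_zero one_pos)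
    simpa [Function.comp_def] using (continuous_exp.tendsto _).comp h
  refine hexp.congr' (eventually_nhdsWithin_of_forall fun t (ht : 0 < t) => ?_)
  dsimp only
  rw [rpow_def_of_pos (div_pos ha ht), log_div ha.ne' ht.ne']
  ring_nf

theorem Real.continuousAt_Gamma_of_pos {s : ℝ} (hs : 0 < s) : ContinuousAt Gamma s :=
  (differentiableAt_Gamma fun m => by linarith [(m.cast_nonneg : (0 : ℝ) ≤ m)]).continuousAt

theorem tendsto_WpIntegral_nhdsGT {d : ℕ} (hd : 1 ≤ d) :
    Tendsto (fun p => WpIntegral d (d - 1) p) (𝓝[>] (d : ℝ))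
      (𝓝 ((d : ℝ) ^ (d : ℝ) * π ^ ((d : ℝ) / 2) * (Gamma (d / 2) / Gamma d))) := by
  have hd0 : (0 : ℝ) < d := Nat.cast_pos.2 hd
  have hformula : ∀ p ∈ Ioi (d : ℝ), WpIntegral d (d - 1) p
      = p ^ p * π ^ ((d : ℝ) / 2) * (2 / (p - d)) ^ (p - d) * (Gamma (p - d / 2) / Gamma p) :=
    fun p (hp : (d : ℝ) < p) => by
      rw [WpIntegral_eq hd (by linarith) (by linarith), sub_sub_sub_cancel_right]
  have hpow : ContinuousAt (fun p : ℝ => p ^ p) d :=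
    continuousAt_id.rpow continuousAt_id (Or.inl hd0.ne')
  have hratio : ContinuousAt (fun p => Gamma (p - d / 2) / Gamma p) d := by
    refine ContinuousAt.div ?_ (continuousAt_Gamma_of_pos hd0) (Gamma_pos_of_pos hd0).ne'
    refine ContinuousAt.comp (g := Gamma) ?_ (continuousAt_id.sub continuousAt_const)
    exact continuousAt_Gamma_of_pos (by simp; linarith)
  have hsub : Tendsto (fun p : ℝ => p - d) (𝓝 (d : ℝ)) (𝓝 0) := by
    simpa using (continuous_sub_right (d : ℝ)).tendsto (d : ℝ)
  have hshift : Tendsto (fun p : ℝ => p - d) (𝓝[>] (d : ℝ)) (𝓝[>] 0) :=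
    tendsto_nhdsWithin_of_tendsto_nhds_of_eventually_within _ (hsub.mono_left nhdsWithin_le_nhds)
      (eventually_nhdsWithin_of_forall fun p (hp : (d : ℝ) < p) => sub_pos.2 hp)
  have h := (((hpow.tendsto.mono_left nhdsWithin_le_nhds).mul_const (π ^ ((d : ℝ) / 2))).mul
    ((tendsto_div_rpow_self_nhdsGT_zero two_pos).comp hshift)).mul
    (hratio.tendsto.mono_left nhdsWithin_le_nhds)
  rw [mul_one, sub_half] at h
  exact h.congr' (eventually_nhdsWithin_of_forall fun p hp => (hformula p hp).symm)

/-- **The `L^p(ℝ^d)` norm of the explicit radial potential `W_p`.** For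
`0 ≤ δ < p − 1` and `p > d/2`,
`∫_{ℝ^d} W_p^p = p^p π^{d/2} (2/(p−1−δ))^{p−d} Γ(p−d/2)/Γ(p)`; in particular
with `δ = d − 1`, `(∫ W_p^p)^{1/p} → d √π (Γ(d/2)/Γ(d))^{1/d}` as `p → d⁺`. -/
theorem WpIntegral_eq_and_limit (d : ℕ) (hd : 1 ≤ d) :
    (∀ δ p : ℝ, 0 ≤ δ → δ < p - 1 → (d : ℝ) / 2 < p →
      WpIntegral d δ p
        = p ^ p * Real.pi ^ ((d : ℝ) / 2) * (2 / (p - 1 - δ)) ^ (p - d)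
          * (Real.Gamma (p - d / 2) / Real.Gamma p)) ∧
    Tendsto (fun p : ℝ => (WpIntegral d ((d : ℝ) - 1) p) ^ (1 / p))
      (nhdsWithin (d : ℝ) (Set.Ioi (d : ℝ)))
      (nhds ((d : ℝ) * Real.sqrt Real.pi
        * (Real.Gamma (d / 2) / Real.Gamma d) ^ (1 / (d : ℝ)))) := by
  refine ⟨fun δ p _ hδp hdp => WpIntegral_eq hd hδp hdp, ?_⟩
  have hd0 : (0 : ℝ) < d := Nat.cast_pos.2 hd
  have hq : 0 < Gamma (d / 2) / Gamma d :=
    div_pos (Gamma_pos_of_pos (by positivity)) (Gamma_pos_of_pos hd0)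
  have hroot : ((d : ℝ) ^ (d : ℝ) * π ^ ((d : ℝ) / 2) * (Gamma (d / 2) / Gamma d)) ^ (1 / (d : ℝ))
      = d * √π * (Gamma (d / 2) / Gamma d) ^ (1 / (d : ℝ)) := by
    rw [mul_rpow (by positivity) hq.le, mul_rpow (by positivity) (by positivity),
      ← rpow_mul hd0.le, ← rpow_mul pi_pos.le, sqrt_eq_rpow]
    field_simp
    exact rpow_one _
  have hexponent : Tendsto (fun p : ℝ => 1 / p) (𝓝[>] (d : ℝ)) (𝓝 (1 / d)) :=
    (tendsto_const_nhds.div tendsto_id hd0.ne').mono_left nhdsWithin_le_nhds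
  rw [← hroot]
  exact (tendsto_WpIntegral_nhdsGT hd).rpow hexponent (Or.inl (by positivity))
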